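/- For i = 1,2,3,..., let g_i : B_1 → ℝ^Q (B_1 ⊂ ℝⁿ the open unit ball) be continuous functions that are homogeneous of degree 1 on B_1, i.e., g_i(λx) = λ g_i(x) whenever λ > 0 and both x, λx ∈ B_1. Let z_i → z in B_1 and ρ_i → 0 with ρ_i > 0, and set h_i(x) = g_i(z_i + ρ_i x). Suppose h_i → h locally uniformly on B_1 and that h is homogeneous of degree 1 on B_1. Then the homogeneous degree 1 extension h̃ of h to ℝⁿ satisfies h̃(x + tz) = h̃(x) for all x ∈ ℝⁿ and all t ∈ ℝ. -/

import Mathlib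

open Metric Filter

/-- If continuous functions `g_i` homogeneous of degree 1 on the unit ball are rescaled by
`h_i(x) = g_i(z_i + ρ_i x)` with `z_i → z` in `B_1`, `ρ_i → 0`, and `h_i → h` locally
uniformly on `B_1` with `h` homogeneous of degree 1, then the homogeneous degree one
extension `h̃` of `h` to `ℝⁿ` is invariant under translations in the direction of `z`. -/
theorem stmt_3 {n Q : ℕ}
    (g : ℕ → EuclideanSpace ℝ (Fin n) → EuclideanSpace ℝ (Fin Q))
    (hgc : ∀ i, ContinuousOn (g i) (ball (0 : EuclideanSpace ℝ (Fin n)) 1))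
    (hghom : ∀ i, ∀ (c : ℝ) (x : EuclideanSpace ℝ (Fin n)), 0 < c →
      x ∈ ball (0 : EuclideanSpace ℝ (Fin n)) 1 →
      c • x ∈ ball (0 : EuclideanSpace ℝ (Fin n)) 1 →
      g i (c • x) = c • g i x)
    (z : ℕ → EuclideanSpace ℝ (Fin n)) (z₀ : EuclideanSpace ℝ (Fin n))
    (hz : Tendsto z atTop (nhds z₀))
    (hz₀ : z₀ ∈ ball (0 : EuclideanSpace ℝ (Fin n)) 1)
    (hzball : ∀ i, z i ∈ ball (0 : EuclideanSpace ℝ (Fin n)) 1)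
    (ρ : ℕ → ℝ) (hρpos : ∀ i, 0 < ρ i) (hρ : Tendsto ρ atTop (nhds 0))
    (h : EuclideanSpace ℝ (Fin n) → EuclideanSpace ℝ (Fin Q))
    (hconv : TendstoLocallyUniformlyOn (fun i x => g i (z i + ρ i • x)) h atTop
      (ball (0 : EuclideanSpace ℝ (Fin n)) 1))
    (hhom : ∀ (c : ℝ) (x : EuclideanSpace ℝ (Fin n)), 0 < c →
      x ∈ ball (0 : EuclideanSpace ℝ (Fin n)) 1 →
      c • x ∈ ball (0 : EuclideanSpace ℝ (Fin n)) 1 →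
      h (c • x) = c • h x)
    (htilde : EuclideanSpace ℝ (Fin n) → EuclideanSpace ℝ (Fin Q))
    (hagree : ∀ x ∈ ball (0 : EuclideanSpace ℝ (Fin n)) 1, htilde x = h x)
    (htildehom : ∀ (c : ℝ) (x : EuclideanSpace ℝ (Fin n)), 0 < c →
      htilde (c • x) = c • htilde x) :
    ∀ (x : EuclideanSpace ℝ (Fin n)) (t : ℝ), htilde (x + t • z₀) = htilde x := by
  have hz0n : ‖z₀‖ < 1 := by simpa [mem_ball_zero_iff] using hz₀
  -- eventually ‖z i‖ + ρ i < 1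
  have hsum : Tendsto (fun i => ‖z i‖ + ρ i) atTop (nhds ‖z₀‖) := by
    simpa using hz.norm.add hρ
  have hEv : ∀ᶠ i in atTop, ‖z i‖ + ρ i < 1 :=
    hsum.eventually (eventually_lt_nhds hz0n)
  have hmem : ∀ i, ‖z i‖ + ρ i < 1 →
      ∀ y : EuclideanSpace ℝ (Fin n), y ∈ ball (0 : EuclideanSpace ℝ (Fin n)) 1 →
      z i + ρ i • y ∈ ball (0 : EuclideanSpace ℝ (Fin n)) 1 := by
    intro i hi y hy
    rw [mem_ball_zero_iff] at hy ⊢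
    calc ‖z i + ρ i • y‖ ≤ ‖z i‖ + ‖ρ i • y‖ := norm_add_le _ _
    _ = ‖z i‖ + ρ i * ‖y‖ := by rw [norm_smul, Real.norm_eq_abs, abs_of_pos (hρpos i)]
    _ ≤ ‖z i‖ + ρ i * 1 := by nlinarith [(hρpos i).le, hy.le]
    _ < 1 := by simpa using hi
  -- continuity of h on the ball
  have hcont : ContinuousOn h (ball (0 : EuclideanSpace ℝ (Fin n)) 1) := by
    refine hconv.continuousOn (Eventually.frequently ?_)
    filter_upwards [hEv] with i hi
    refine (hgc i).comp ?_ ?_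
    · exact (by fun_prop :
        Continuous fun y : EuclideanSpace ℝ (Fin n) => z i + ρ i • y).continuousOn
    · intro y hy; exact hmem i hi y hy
  -- key: translation invariance of h inside the ball
  have key : ∀ (x : EuclideanSpace ℝ (Fin n)) (t : ℝ),
      x ∈ ball (0 : EuclideanSpace ℝ (Fin n)) 1 →
      x + t • z₀ ∈ ball (0 : EuclideanSpace ℝ (Fin n)) 1 →
      h (x + t • z₀) = h x := by
    intro x t hx hxt
    set w : ℕ → EuclideanSpace ℝ (Fin n) := fun i => x + t • z i + (ρ i * t) • x with hw_def
    have hρt : Tendsto (fun i => ρ i * t) atTop (nhds 0) := by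
      simpa using hρ.mul_const t
    have hw : Tendsto w atTop (nhds (x + t • z₀)) := by
      have : Tendsto (fun i => x + t • z i + (ρ i * t) • x) atTop
          (nhds (x + t • z₀ + (0 : ℝ) • x)) :=
        (tendsto_const_nhds.add (hz.const_smul t)).add (hρt.smul_const x)
      simpa using this
    have hwball : ∀ᶠ i in atTop, w i ∈ ball (0 : EuclideanSpace ℝ (Fin n)) 1 := by
      have : Tendsto (fun i => ‖w i‖) atTop (nhds ‖x + t • z₀‖) := hw.norm
      filter_upwards [this.eventually (eventually_lt_nhds (mem_ball_zero_iff.mp hxt))] with i hi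
      exact mem_ball_zero_iff.mpr hi
    have hcpos : ∀ᶠ i in atTop, 0 < 1 + ρ i * t := by
      filter_upwards [hρt.eventually (eventually_gt_nhds (by norm_num : (-1:ℝ) < 0))] with i hi
      linarith
    -- the key identity, eventually
    have hident : ∀ᶠ i in atTop,
        g i (z i + ρ i • w i) = (1 + ρ i * t) • g i (z i + ρ i • x) := by
      filter_upwards [hEv, hwball, hcpos] with i hi hwi hci
      have hrw : z i + ρ i • w i = (1 + ρ i * t) • (z i + ρ i • x) := by
        simp only [hw_def, smul_add, smul_smul, add_smul, one_smul]
        module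
      rw [hrw]
      exact hghom i (1 + ρ i * t) (z i + ρ i • x) hci (hmem i hi x hx)
        (hrw ▸ hmem i hi (w i) hwi)
    have hL : Tendsto (fun i => g i (z i + ρ i • w i)) atTop (nhds (h (x + t • z₀))) := by
      exact hconv.tendsto_comp (hcont.continuousWithinAt hxt) hxt
        (tendsto_nhdsWithin_iff.mpr ⟨hw, hwball⟩)
    have hR : Tendsto (fun i => (1 + ρ i * t) • g i (z i + ρ i • x)) atTop
        (nhds ((1 : ℝ) • h x)) := by
      have h1 : Tendsto (fun i => 1 + ρ i * t) atTop (nhds (1 : ℝ)) := by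
        simpa using (hρt.const_add 1)
      exact h1.smul (hconv.tendsto_at hx)
    have := tendsto_nhds_unique (hL.congr' hident) hR
    simpa using this
  -- globalize via homogeneity of htilde
  intro x t
  set c : ℝ := (1 + ‖x‖ + ‖x + t • z₀‖)⁻¹ with hc_def
  have hcpos : 0 < c := by
    apply inv_pos.mpr; positivity
  have hden : 0 < 1 + ‖x‖ + ‖x + t • z₀‖ := by positivity
  have hxball : c • x ∈ ball (0 : EuclideanSpace ℝ (Fin n)) 1 := by
    rw [mem_ball_zero_iff, norm_smul, Real.norm_eq_abs, abs_of_pos hcpos, hc_def]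
    rw [inv_mul_lt_iff₀ hden]
    nlinarith [norm_nonneg (x + t • z₀)]
  have hxtball : c • x + (c * t) • z₀ ∈ ball (0 : EuclideanSpace ℝ (Fin n)) 1 := by
    have : c • x + (c * t) • z₀ = c • (x + t • z₀) := by
      simp [smul_add, smul_smul]
    rw [this, mem_ball_zero_iff, norm_smul, Real.norm_eq_abs, abs_of_pos hcpos, hc_def]
    rw [inv_mul_lt_iff₀ hden]
    nlinarith [norm_nonneg x]
  have step : htilde (c • (x + t • z₀)) = htilde (c • x) := by
    have e1 : c • (x + t • z₀) = c • x + (c * t) • z₀ := by simp [smul_add, smul_smul]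
    rw [e1, hagree _ hxtball, key (c • x) (c * t) hxball hxtball, ← hagree _ hxball]
  have cancel : ∀ y : EuclideanSpace ℝ (Fin n), c⁻¹ • htilde (c • y) = htilde y := by
    intro y
    rw [htildehom c _ hcpos, smul_smul, inv_mul_cancel₀ hcpos.ne', one_smul]
  calc htilde (x + t • z₀) = c⁻¹ • htilde (c • (x + t • z₀)) := (cancel _).symm
  _ = c⁻¹ • htilde (c • x) := by rw [step]
  _ = htilde x := cancel _
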